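/- Let k be a positive integer and set a = 1 if k is even and a = 2 if k is odd. Let d be an integer such that (i) a·(2k−1)! divides d, and (ii) the rational number (bernoulli(2k) / (2·(2k)!))·d is an integer. Then d is divisible by (2k−1)!·den(bernoulli(2k)/(4k)). (This is the arithmetic core of Lemma 4.1: the divisibility of the middle Pontrjagin class of the orbit space, with d playing the role of the divisibility d(N) and condition (ii) coming from the integrality of the twisted Â-genus.) -/

import Mathlib

/-! Since `(2k)! = 2k · (2k-1)!`, writing `d = (2k-1)! · e` turns condition (ii) into the
integrality of `bernoulli (2k) / (4k) · e`, which forces `den (bernoulli (2k) / (4k)) ∣ e`. -/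

open Nat

theorem Rat.den_dvd_of_mul_eq_intCast {q : ℚ} {e m : ℤ} (h : q * e = m) : (q.den : ℤ) ∣ e := by
  rcases eq_or_ne e 0 with rfl | he
  · exact dvd_zero _
  · have hq : q = Rat.divInt m e := by
      rw [Rat.divInt_eq_div, ← h, mul_div_cancel_right₀ _ (Int.cast_ne_zero.mpr he)]
    exact hq ▸ Rat.den_dvd m e

theorem div_two_mul_factorial_mul_factorial_pred (q : ℚ) {k : ℕ} (hk : 0 < k) (e : ℚ) :
    q / (2 * (2 * k)! : ℚ) * ((2 * k - 1)! * e) = q / (4 * k) * e := by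
  have h : ((2 * k)! : ℚ) = 2 * k * (2 * k - 1)! := by
    exact_mod_cast (Nat.mul_factorial_pred (by omega : 2 * k ≠ 0)).symm
  have : ((2 * k - 1)! : ℚ) ≠ 0 := by positivity
  rw [h]
  field_simp
  ring

theorem stmt_0_general (k : ℕ) (hk : 0 < k) (a : ℕ)
    (d : ℤ)
    (h1 : ((a * Nat.factorial (2 * k - 1) : ℕ) : ℤ) ∣ d)
    (h2 : ∃ m : ℤ, bernoulli (2 * k) / (2 * (Nat.factorial (2 * k) : ℚ)) * (d : ℚ) = (m : ℚ)) :
    ((Nat.factorial (2 * k - 1) * (bernoulli (2 * k) / (4 * (k : ℚ))).den : ℕ) : ℤ) ∣ d := by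
  obtain ⟨e, rfl⟩ : ((2 * k - 1)! : ℤ) ∣ d :=
    (Int.natCast_dvd_natCast.mpr (Nat.dvd_mul_left _ a)).trans h1
  obtain ⟨m, hm⟩ := h2
  have hme : bernoulli (2 * k) / (4 * k) * e = m := by
    rw [← hm]
    push_cast
    exact (div_two_mul_factorial_mul_factorial_pred _ hk _).symm
  push_cast
  exact mul_dvd_mul_left _ (Rat.den_dvd_of_mul_eq_intCast hme)

/-- Arithmetic core of Lemma 4.1: if `a·(2k−1)!` divides `d` (with `a = 1` for `k` even,
`a = 2` for `k` odd) and `(bernoulli(2k)/(2·(2k)!))·d` is an integer, then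
`(2k−1)!·den(bernoulli(2k)/(4k))` divides `d`. -/
theorem stmt_0 (k : ℕ) (hk : 0 < k) (a : ℕ) (ha : a = if Even k then 1 else 2)
    (d : ℤ)
    (h1 : ((a * Nat.factorial (2 * k - 1) : ℕ) : ℤ) ∣ d)
    (h2 : ∃ m : ℤ, bernoulli (2 * k) / (2 * (Nat.factorial (2 * k) : ℚ)) * (d : ℚ) = (m : ℚ)) :
    ((Nat.factorial (2 * k - 1) * (bernoulli (2 * k) / (4 * (k : ℚ))).den : ℕ) : ℤ) ∣ d :=
  stmt_0_general k hk a d h1 h2
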